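/- Let ρ : (0,1] → ℝ be a nonnegative measurable function such that r ↦ r³ρ(r) and r ↦ r ρ(r) are integrable on (0,1), and suppose there is r* ∈ (0,1] such that the map r ↦ r ρ(r) is nonincreasing on (0, r*] (Case I). Then for every δ > 0 and every k ∈ ℤ² \ {0} with δ|k| ≥ π, one has δ² λ_δ(k) ≥ min{ 4 (arccos(1/3) − π/3) ∫₀^{r*} r ρ(r) (1 − cos r) dr , π ∫_{r*/√2}^{r*} r ρ(r) dr }. -/
import Mathlib

open Real MeasureTheory

/-- Euclidean norm of a nonzero integer vector `k ∈ ℤ²`. -/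
noncomputable def knorm2 (k : ℤ × ℤ) : ℝ :=
  Real.sqrt ((k.1 : ℝ) ^ 2 + (k.2 : ℝ) ^ 2)

/-- The 2D Fourier symbol of the nonlocal diffusion operator:
`λ_δ(k) = (4/δ²) ∫₀^{π/2} ∫₀¹ r ρ(r) (1 − cos(r δ |k| cos θ)) dr dθ`. -/
noncomputable def lambdaDelta2 (ρ : ℝ → ℝ) (δ κ : ℝ) : ℝ :=
  (4 / δ ^ 2) * ∫ θ in (0:ℝ)..(π / 2), ∫ r in (0:ℝ)..1,
    r * ρ r * (1 - Real.cos (r * δ * κ * Real.cos θ))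

lemma key_antitone (g : ℝ → ℝ) (hg : Measurable g) (b s : ℝ) (hs : 0 < s)
    (hnn : ∀ r ∈ Set.Ioc (0:ℝ) b, 0 ≤ g r) (hanti : AntitoneOn g (Set.Ioc (0:ℝ) b))
    (hint : IntervalIntegrable g volume 0 b) (hcb : π / s ≤ b) :
    ∫ r in (π/s)..b, g r ≤ ∫ r in (0:ℝ)..b, g r * (1 - Real.cos (r * s)) := by
  have hc : 0 < π / s := div_pos pi_pos hs
  have hb : 0 < b := lt_of_lt_of_le hc hcb
  set c := π / s with hcdef
  set φ : ℝ → ℝ := fun r => 1 - Real.cos (r * s) with hφdef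
  have hφc : Continuous φ := by fun_prop
  have hφnn : ∀ r, 0 ≤ φ r := fun r => by
    simp only [hφdef, sub_nonneg]; exact Real.cos_le_one _
  -- integrability of g * φ on (0, b]
  have hintφ : IntegrableOn (fun r => g r * φ r) (Set.Ioc 0 b) volume :=
    (hint.mul_continuousOn hφc.continuousOn).1
  have hintc : IntegrableOn g (Set.Ioc c b) volume := by
    have : IntervalIntegrable g volume c b := hint.mono_set (by
      rw [Set.uIcc_of_le hcb, Set.uIcc_of_le hb.le]
      exact Set.Icc_subset_Icc hc.le le_rfl)
    exact this.1
  -- rewrite as set integrals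
  rw [intervalIntegral.integral_of_le hcb, intervalIntegral.integral_of_le hb.le]
  have hgnn0 : 0 ≤ᵐ[volume.restrict (Set.Ioc (0:ℝ) b)] g := by
    filter_upwards [ae_restrict_mem measurableSet_Ioc] with r hr using hnn r hr
  have hgφnn : 0 ≤ᵐ[volume.restrict (Set.Ioc (0:ℝ) b)] fun r => g r * φ r := by
    filter_upwards [ae_restrict_mem measurableSet_Ioc] with r hr
    exact mul_nonneg (hnn r hr) (hφnn r)
  have hgnnc : 0 ≤ᵐ[volume.restrict (Set.Ioc c b)] g := by
    filter_upwards [ae_restrict_mem measurableSet_Ioc] with r hr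
    exact hnn r ⟨hc.trans_le hr.1.le, hr.2⟩
  rw [integral_eq_lintegral_of_nonneg_ae hgnnc hg.aestronglyMeasurable,
    integral_eq_lintegral_of_nonneg_ae hgφnn ((hg.mul hφc.measurable).aestronglyMeasurable)]
  have hfin : (∫⁻ r in Set.Ioc (0:ℝ) b, ENNReal.ofReal (g r * φ r)) ≠ ⊤ :=
    hintφ.lintegral_lt_top.ne
  apply ENNReal.toReal_mono hfin
  -- withDensity measure
  set ν := (volume.restrict (Set.Ioc (0:ℝ) b)).withDensity
      (fun r => ENNReal.ofReal (φ r)) with hνdef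
  have hφm : Measurable fun r => ENNReal.ofReal (φ r) :=
    ENNReal.measurable_ofReal.comp hφc.measurable
  have hgφ_eq : (∫⁻ r in Set.Ioc (0:ℝ) b, ENNReal.ofReal (g r * φ r))
      = ∫⁻ r, ENNReal.ofReal (g r) ∂ν := by
    rw [hνdef, lintegral_withDensity_eq_lintegral_mul _ hφm hg.ennreal_ofReal]
    apply lintegral_congr_ae
    filter_upwards [ae_restrict_mem measurableSet_Ioc] with r hr
    simp only [Pi.mul_apply, Function.comp]
    rw [mul_comm (g r) (φ r), ENNReal.ofReal_mul (hφnn r)]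
  rw [hgφ_eq]
  have hνac : ν ≪ volume.restrict (Set.Ioc (0:ℝ) b) :=
    withDensity_absolutelyContinuous _ _
  have hgnnν : 0 ≤ᵐ[ν] g := hνac.ae_le hgnn0
  rw [lintegral_eq_lintegral_meas_lt _ hgnnc hg.aemeasurable,
    lintegral_eq_lintegral_meas_lt _ hgnnν hg.aemeasurable]
  apply lintegral_mono
  intro t
  dsimp only
  -- superlevel set comparison
  have hAms : MeasurableSet {r : ℝ | t < g r} := measurableSet_lt measurable_const hg
  rw [Measure.restrict_apply hAms, hνdef, withDensity_apply _ hAms,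
    Measure.restrict_restrict hAms]
  set S := {r : ℝ | t < g r} ∩ Set.Ioc 0 b with hSdef
  rcases Set.eq_empty_or_nonempty S with hSe | hSne
  · have h0 : {r : ℝ | t < g r} ∩ Set.Ioc c b = ∅ := by
      apply Set.eq_empty_of_subset_empty
      rw [← hSe]
      exact Set.inter_subset_inter_right _ (Set.Ioc_subset_Ioc hc.le le_rfl)
    rw [h0]
    simp
  · set u := sSup S with hudef
    have hSsub : S ⊆ Set.Ioc 0 b := Set.inter_subset_right
    have hSbdd : BddAbove S := BddAbove.mono hSsub bddAbove_Ioc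
    have hub : u ≤ b := csSup_le hSne fun x hx => (hSsub hx).2
    obtain ⟨x0, hx0⟩ := hSne
    have hu0 : 0 < u := lt_of_lt_of_le (hSsub hx0).1 (le_csSup hSbdd hx0)
    have hSIoc : S ⊆ Set.Ioc 0 u := fun x hx => ⟨(hSsub hx).1, le_csSup hSbdd hx⟩
    have hIooS : Set.Ioo 0 u ⊆ S := by
      intro y hy
      obtain ⟨x, hxS, hyx⟩ := exists_lt_of_lt_csSup ⟨x0, hx0⟩ hy.2
      have hyb : y ∈ Set.Ioc (0:ℝ) b := ⟨hy.1, hyx.le.trans (hSsub hxS).2⟩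
      exact ⟨lt_of_lt_of_le hxS.1 (hanti hyb (hSsub hxS) hyx.le), hyb⟩
    have hΦ : ∫ r in Set.Ioo (0:ℝ) u, φ r = u - Real.sin (u * s) / s := by
      rw [← integral_Ioc_eq_integral_Ioo, ← intervalIntegral.integral_of_le hu0.le]
      simp only [hφdef]
      have hcos : IntervalIntegrable (fun x : ℝ => Real.cos (x * s)) volume 0 u :=
        Continuous.intervalIntegrable (by fun_prop) 0 u
      rw [intervalIntegral.integral_sub intervalIntegrable_const hcos,
        intervalIntegral.integral_const,
        intervalIntegral.integral_comp_mul_right Real.cos hs.ne']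
      simp [integral_cos, smul_eq_mul]
      ring
    have hsin : Real.sin (u * s) / s ≤ c := by
      rw [hcdef, div_le_div_iff_of_pos_right hs]
      exact (Real.sin_le_one _).trans (by linarith [Real.pi_gt_three])
    calc volume ({r : ℝ | t < g r} ∩ Set.Ioc c b)
        ≤ volume (Set.Ioc c u) := by
          apply measure_mono
          intro x hx
          exact ⟨hx.2.1, le_csSup hSbdd ⟨hx.1, ⟨hc.trans hx.2.1, hx.2.2⟩⟩⟩
      _ = ENNReal.ofReal (u - c) := Real.volume_Ioc
      _ ≤ ENNReal.ofReal (u - Real.sin (u * s) / s) :=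
          ENNReal.ofReal_le_ofReal (by linarith)
      _ = ∫⁻ r in Set.Ioo (0:ℝ) u, ENNReal.ofReal (φ r) := by
          rw [← hΦ]
          exact ofReal_integral_eq_lintegral_ofReal
            ((hφc.intervalIntegrable 0 u).1.mono_set Set.Ioo_subset_Ioc_self)
            (Filter.Eventually.of_forall fun r => hφnn r)
      _ ≤ ∫⁻ r in S, ENNReal.ofReal (φ r) := lintegral_mono_set hIooS

theorem lambdaDelta2_caseI_bound (ρ : ℝ → ℝ) (hmeas : Measurable ρ)
    (hnonneg : ∀ r ∈ Set.Ioc (0:ℝ) 1, 0 ≤ ρ r)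
    (hint3 : IntervalIntegrable (fun r => r ^ 3 * ρ r) volume 0 1)
    (hint1 : IntervalIntegrable (fun r => r * ρ r) volume 0 1)
    (rs : ℝ) (hrs : rs ∈ Set.Ioc (0:ℝ) 1)
    (hanti : AntitoneOn (fun r => r * ρ r) (Set.Ioc (0:ℝ) rs))
    (δ : ℝ) (hδ : 0 < δ) (k : ℤ × ℤ) (hk : k ≠ 0)
    (hlarge : π ≤ δ * knorm2 k) :
    min (4 * (Real.arccos (1 / 3) - π / 3) *
          (∫ r in (0:ℝ)..rs, r * ρ r * (1 - Real.cos r)))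
        (π * ∫ r in (rs / Real.sqrt 2)..rs, r * ρ r)
      ≤ δ ^ 2 * lambdaDelta2 ρ δ (knorm2 k) := by
  obtain ⟨hrs0, hrs1⟩ := hrs
  have hπ3 : (3:ℝ) < π := Real.pi_gt_three
  set κ := knorm2 k with hκdef
  set L := δ * κ with hLdef
  have hL : π ≤ L := hlarge
  have hLpos : 0 < L := lt_of_lt_of_le Real.pi_pos hL
  -- nonnegativity of r ρ r
  have hgnn : ∀ r ∈ Set.Icc (0:ℝ) 1, 0 ≤ r * ρ r := by
    intro r hr
    rcases eq_or_lt_of_le hr.1 with h | h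
    · simp [← h]
    · exact mul_nonneg h.le (hnonneg r ⟨h, hr.2⟩)
  have hgnn' : ∀ r ∈ Set.Icc (0:ℝ) rs, 0 ≤ r * ρ r :=
    fun r hr => hgnn r ⟨hr.1, hr.2.trans hrs1⟩
  -- unfold lambdaDelta2 and abstract the inner function
  simp only [lambdaDelta2]
  set F : ℝ → ℝ := fun θ => ∫ r in (0:ℝ)..1,
    r * ρ r * (1 - Real.cos (r * δ * κ * Real.cos θ)) with hFdef
  have hδ2 : (δ:ℝ) ^ 2 ≠ 0 := pow_ne_zero _ hδ.ne'
  rw [show δ ^ 2 * (4 / δ ^ 2 * ∫ θ in (0:ℝ)..(π/2), F θ)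
      = 4 * ∫ θ in (0:ℝ)..(π/2), F θ by field_simp]
  -- integrability of integrands in r
  have hintθ : ∀ c : ℝ, IntervalIntegrable
      (fun r => r * ρ r * (1 - Real.cos (r * δ * κ * c))) volume 0 1 :=
    fun c => hint1.mul_continuousOn (Continuous.continuousOn (by fun_prop))
  have hint_cosr : IntervalIntegrable
      (fun r => r * ρ r * (1 - Real.cos r)) volume 0 1 :=
    hint1.mul_continuousOn (Continuous.continuousOn (by fun_prop))
  have hsub01 : Set.uIcc (0:ℝ) rs ⊆ Set.uIcc (0:ℝ) 1 := by
    rw [Set.uIcc_of_le hrs0.le, Set.uIcc_of_le (zero_le_one)]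
    exact Set.Icc_subset_Icc le_rfl hrs1
  -- properties of F
  have hFnn : ∀ θ, 0 ≤ F θ := by
    intro θ
    apply intervalIntegral.integral_nonneg zero_le_one
    intro r hr
    exact mul_nonneg (hgnn r hr) (by simp [sub_nonneg, Real.cos_le_one])
  have hFmeas : Measurable F := by
    have h1 : F = fun θ => ∫ r in Set.Ioc (0:ℝ) 1,
        (fun p : ℝ × ℝ => p.2 * ρ p.2 *
          (1 - Real.cos (p.2 * δ * κ * Real.cos p.1))) (θ, r) :=
      funext fun θ => intervalIntegral.integral_of_le zero_le_one
    rw [h1]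
    have hsm : StronglyMeasurable (fun p : ℝ × ℝ => p.2 * ρ p.2 *
        (1 - Real.cos (p.2 * δ * κ * Real.cos p.1))) :=
      (by fun_prop : Measurable _).stronglyMeasurable
    exact (MeasureTheory.StronglyMeasurable.integral_prod_right'
      (ν := volume.restrict (Set.Ioc (0:ℝ) 1)) hsm).measurable
  set M : ℝ := ∫ r in (0:ℝ)..1, r * ρ r * 2 with hMdef
  have hFle : ∀ θ, F θ ≤ M := by
    intro θ
    apply intervalIntegral.integral_mono_on zero_le_one (hintθ _)
      (hint1.mul_continuousOn continuousOn_const)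
    intro r hr
    apply mul_le_mul_of_nonneg_left _ (hgnn r hr)
    nlinarith [Real.neg_one_le_cos (r * δ * κ * Real.cos θ)]
  have hFint : IntervalIntegrable F volume 0 (π / 2) := by
    rw [intervalIntegrable_iff_integrableOn_Ioc_of_le (by positivity)]
    apply Integrable.mono' (integrable_const M)
      hFmeas.aestronglyMeasurable.restrict
    filter_upwards with θ
    rw [Real.norm_eq_abs, abs_of_nonneg (hFnn θ)]
    exact hFle θ
  -- case split
  rcases le_or_gt (L * rs) (2 * π) with hcase | hcase
  · -- Case (a): L rs ≤ 2π, use the first term of the min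
    set CA : ℝ := ∫ r in (0:ℝ)..rs, r * ρ r * (1 - Real.cos r) with hCA
    have harc_le : Real.arccos (1/3) ≤ π / 2 := Real.arccos_le_pi_div_two.2 (by norm_num)
    have harc_ge : π / 3 ≤ Real.arccos (1/3) := by
      have h12 : Real.arccos (1/2) = π / 3 := by
        rw [show (1:ℝ)/2 = Real.cos (π/3) from (Real.cos_pi_div_three).symm,
          Real.arccos_cos (by positivity) (by linarith)]
      rw [← h12]
      simp only [Real.arccos]
      have := Real.monotone_arcsin (show (1:ℝ)/3 ≤ 1/2 by norm_num)
      linarith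
    have hpt : ∀ θ ∈ Set.Icc (π/3) (Real.arccos (1/3)), CA ≤ F θ := by
      intro θ hθ
      have hθpos : 0 < θ := lt_of_lt_of_le (by positivity) hθ.1
      have hcos1 : Real.cos θ ≤ 1/2 := by
        have := Real.cos_le_cos_of_nonneg_of_le_pi (by positivity : 0 ≤ π/3)
          (le_trans (hθ.2.trans harc_le) (by linarith)) hθ.1
        rwa [Real.cos_pi_div_three] at this
      have hcos2 : 1/3 ≤ Real.cos θ := by
        have := Real.cos_le_cos_of_nonneg_of_le_pi hθpos.le
          (Real.arccos_le_pi (1/3)) hθ.2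
        rwa [Real.cos_arccos (by norm_num) (by norm_num)] at this
      have step1 : CA ≤ ∫ r in (0:ℝ)..rs,
          r * ρ r * (1 - Real.cos (r * δ * κ * Real.cos θ)) := by
        apply intervalIntegral.integral_mono_on hrs0.le
          (hint_cosr.mono_set hsub01) ((hintθ (Real.cos θ)).mono_set hsub01)
        intro r hr
        have hrκ : r * δ * κ * Real.cos θ = r * (L * Real.cos θ) := by
          rw [hLdef]; ring
        apply mul_le_mul_of_nonneg_left _ (hgnn' r hr)
        have hx1 : r ≤ r * (L * Real.cos θ) := by
          apply le_mul_of_one_le_right hr.1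
          nlinarith
        have hx2 : r * (L * Real.cos θ) ≤ π := by
          have h1 : r * (L * Real.cos θ) ≤ rs * (L * (1/2)) := by
            apply mul_le_mul hr.2 (mul_le_mul_of_nonneg_left hcos1 hLpos.le)
              (by positivity) hrs0.le
          nlinarith
        have := Real.cos_le_cos_of_nonneg_of_le_pi hr.1 hx2 hx1
        rw [hrκ]
        linarith
      have step2 : (∫ r in (0:ℝ)..rs,
          r * ρ r * (1 - Real.cos (r * δ * κ * Real.cos θ))) ≤ F θ := by
        apply intervalIntegral.integral_mono_interval le_rfl hrs0.le hrs1 _ (hintθ _)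
        filter_upwards [ae_restrict_mem measurableSet_Ioc] with r hr
        exact mul_nonneg (hgnn r ⟨hr.1.le, hr.2⟩) (by simp [sub_nonneg, Real.cos_le_one])
      linarith
    have hchain : (Real.arccos (1/3) - π/3) * CA ≤ ∫ θ in (0:ℝ)..(π/2), F θ := by
      have h1 : (∫ _ in (π/3)..(Real.arccos (1/3)), CA)
          ≤ ∫ θ in (π/3)..(Real.arccos (1/3)), F θ := by
        apply intervalIntegral.integral_mono_on harc_ge
          intervalIntegrable_const (hFint.mono_set ?_) hpt
        rw [Set.uIcc_of_le harc_ge, Set.uIcc_of_le (by positivity)]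
        exact Set.Icc_subset_Icc (by positivity) harc_le
      have h2 : (∫ θ in (π/3)..(Real.arccos (1/3)), F θ)
          ≤ ∫ θ in (0:ℝ)..(π/2), F θ := by
        apply intervalIntegral.integral_mono_interval (by positivity) harc_ge harc_le
          _ hFint
        filter_upwards with θ using hFnn θ
      rw [intervalIntegral.integral_const, smul_eq_mul] at h1
      linarith
    refine le_trans (min_le_left _ _) ?_
    nlinarith [hchain]
  · -- Case (b): L rs > 2π, use the second term of the min
    set CB : ℝ := ∫ r in (rs / Real.sqrt 2)..rs, r * ρ r with hCB
    have hsqrt2 : (1:ℝ) ≤ Real.sqrt 2 := by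
      rw [show (1:ℝ) = Real.sqrt 1 from (Real.sqrt_one).symm]
      exact Real.sqrt_le_sqrt (by norm_num)
    have hsqrt2pos : 0 < Real.sqrt 2 := lt_of_lt_of_le one_pos hsqrt2
    have hsq2 : Real.sqrt 2 ^ 2 = 2 := Real.sq_sqrt (by norm_num)
    have hdivle : rs / Real.sqrt 2 ≤ rs := div_le_self hrs0.le hsqrt2
    have hpt : ∀ θ ∈ Set.Icc (0:ℝ) (π/4), CB ≤ F θ := by
      intro θ hθ
      have hcosθ : Real.sqrt 2 / 2 ≤ Real.cos θ := by
        have := Real.cos_le_cos_of_nonneg_of_le_pi hθ.1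
          (by linarith [Real.pi_pos] : π/4 ≤ π) hθ.2
        rwa [Real.cos_pi_div_four] at this
      set s : ℝ := δ * κ * Real.cos θ with hsdef
      have hsL : s = L * Real.cos θ := by rw [hLdef]
      have hcosθpos : 0 < Real.cos θ := lt_of_lt_of_le (by positivity) hcosθ
      have hspos : 0 < s := by rw [hsL]; positivity
      have hπs : π / s ≤ rs / Real.sqrt 2 := by
        rw [div_le_div_iff₀ hspos hsqrt2pos, hsL]
        nlinarith [mul_le_mul_of_nonneg_left hcosθ (mul_nonneg hLpos.le hrs0.le)]
      have hπs' : π / s ≤ rs := hπs.trans hdivle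
      have hπspos : 0 < π / s := by positivity
      have step1 : CB ≤ ∫ r in (π/s)..rs, r * ρ r := by
        apply intervalIntegral.integral_mono_interval hπs hdivle le_rfl _
          (hint1.mono_set ?_)
        · filter_upwards [ae_restrict_mem measurableSet_Ioc] with r hr
          exact hgnn r ⟨(hπspos.trans hr.1).le, hr.2.trans hrs1⟩
        · rw [Set.uIcc_of_le hπs', Set.uIcc_of_le zero_le_one]
          exact Set.Icc_subset_Icc hπspos.le hrs1
      have step2 : (∫ r in (π/s)..rs, r * ρ r)
          ≤ ∫ r in (0:ℝ)..rs, r * ρ r * (1 - Real.cos (r * s)) := by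
        apply key_antitone (fun r => r * ρ r) (measurable_id.mul hmeas) rs s hspos
          (fun r hr => hgnn r ⟨hr.1.le, hr.2.trans hrs1⟩) hanti
          (hint1.mono_set hsub01) hπs'
      have hcongr : (∫ r in (0:ℝ)..rs, r * ρ r * (1 - Real.cos (r * s)))
          = ∫ r in (0:ℝ)..rs, r * ρ r * (1 - Real.cos (r * δ * κ * Real.cos θ)) := by
        apply intervalIntegral.integral_congr
        intro r _
        rw [hsdef]
        ring_nf
      have step3 : (∫ r in (0:ℝ)..rs,
          r * ρ r * (1 - Real.cos (r * δ * κ * Real.cos θ))) ≤ F θ := by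
        apply intervalIntegral.integral_mono_interval le_rfl hrs0.le hrs1 _ (hintθ _)
        filter_upwards [ae_restrict_mem measurableSet_Ioc] with r hr
        exact mul_nonneg (hgnn r ⟨hr.1.le, hr.2⟩) (by simp [sub_nonneg, Real.cos_le_one])
      rw [hcongr] at step2
      linarith
    have hchain : (π/4) * CB ≤ ∫ θ in (0:ℝ)..(π/2), F θ := by
      have h1 : (∫ _ in (0:ℝ)..(π/4), CB) ≤ ∫ θ in (0:ℝ)..(π/4), F θ := by
        apply intervalIntegral.integral_mono_on (by positivity)
          intervalIntegrable_const (hFint.mono_set ?_) hpt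
        rw [Set.uIcc_of_le (by positivity), Set.uIcc_of_le (by positivity)]
        exact Set.Icc_subset_Icc le_rfl (by linarith [Real.pi_pos])
      have h2 : (∫ θ in (0:ℝ)..(π/4), F θ) ≤ ∫ θ in (0:ℝ)..(π/2), F θ := by
        apply intervalIntegral.integral_mono_interval le_rfl (by positivity)
          (by linarith [Real.pi_pos]) _ hFint
        filter_upwards with θ using hFnn θ
      rw [intervalIntegral.integral_const, smul_eq_mul] at h1
      linarith
    refine le_trans (min_le_right _ _) ?_
    nlinarith [hchain]
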